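/- Let F, G : C → C be additive endofunctors of an additive category C such that (F, G) is an adjoint pair. Then the categories L_F(C) and R_G(C) are isomorphic: the functor sends (Mⁿ, fₙ : F(Mⁿ) → Mⁿ⁺¹) to (Mⁿ, gₙ : Mⁿ → G(Mⁿ⁺¹)), where gₙ is the adjoint transpose of fₙ, and acts as the identity on underlying degreewise morphisms. -/

import Mathlib

open CategoryTheory CategoryTheory.Limits

universe v u

variable {C : Type u} [Category.{v} C] [Preadditive C]

/-- A cochain complex over an endofunctor `F`: objects `M n` together with
differentials `d n : F (M n) ⟶ M (n+1)` satisfying `F (d n) ≫ d (n+1) = 0`. -/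
structure FComplex (C : Type u) [Category.{v} C] [Preadditive C] (F : C ⥤ C) where
  X : ℤ → C
  d : ∀ n : ℤ, F.obj (X n) ⟶ X (n + 1)
  d_comp : ∀ n : ℤ, F.map (d n) ≫ d (n + 1) = 0

namespace FComplex

variable {F : C ⥤ C}

/-- Morphisms of `F`-cochain complexes. -/
@[ext]
structure Hom (M N : FComplex C F) where
  f : ∀ n : ℤ, M.X n ⟶ N.X n
  comm : ∀ n : ℤ, F.map (f n) ≫ N.d n = M.d n ≫ f (n + 1)

instance : Category (FComplex C F) where
  Hom := Hom
  id M := ⟨fun n => 𝟙 (M.X n), fun n => by simp⟩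
  comp φ ψ := ⟨fun n => φ.f n ≫ ψ.f n, fun n => by
    have h := φ.comm n
    rw [F.map_comp, Category.assoc, ψ.comm, ← Category.assoc, h, Category.assoc]⟩
  id_comp φ := Hom.ext (funext fun n => Category.id_comp (φ.f n))
  comp_id φ := Hom.ext (funext fun n => Category.comp_id (φ.f n))
  assoc φ ψ χ := Hom.ext (funext fun n => Category.assoc (φ.f n) (ψ.f n) (χ.f n))

@[simp] theorem comp_f {M N P : FComplex C F} (φ : M ⟶ N) (ψ : N ⟶ P) (n : ℤ) :
    (φ ≫ ψ).f n = φ.f n ≫ ψ.f n := rfl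

@[simp] theorem id_f (M : FComplex C F) (n : ℤ) : (𝟙 M : M ⟶ M).f n = 𝟙 (M.X n) := rfl

end FComplex

/-- A right cochain complex over an endofunctor `F`: objects `M n` together with
morphisms `d n : M n ⟶ F (M (n+1))` satisfying `d n ≫ F (d (n+1)) = 0`. -/
structure RComplex (C : Type u) [Category.{v} C] [Preadditive C] (F : C ⥤ C) where
  X : ℤ → C
  d : ∀ n : ℤ, X n ⟶ F.obj (X (n + 1))
  d_comp : ∀ n : ℤ, d n ≫ F.map (d (n + 1)) = 0

namespace RComplex

variable {F : C ⥤ C}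

/-- Morphisms of right `F`-cochain complexes. -/
@[ext]
structure Hom (M N : RComplex C F) where
  f : ∀ n : ℤ, M.X n ⟶ N.X n
  comm : ∀ n : ℤ, M.d n ≫ F.map (f (n + 1)) = f n ≫ N.d n

instance : Category (RComplex C F) where
  Hom := Hom
  id M := ⟨fun n => 𝟙 (M.X n), fun n => by simp⟩
  comp φ ψ := ⟨fun n => φ.f n ≫ ψ.f n, fun n => by
    have h := ψ.comm n
    rw [F.map_comp, ← Category.assoc, φ.comm, Category.assoc, h, ← Category.assoc]⟩
  id_comp φ := Hom.ext (funext fun n => Category.id_comp (φ.f n))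
  comp_id φ := Hom.ext (funext fun n => Category.comp_id (φ.f n))
  assoc φ ψ χ := Hom.ext (funext fun n => Category.assoc (φ.f n) (ψ.f n) (χ.f n))

end RComplex

namespace CategoryTheory.Adjunction

variable {D : Type*} [Category D] {F G : D ⥤ D} (adj : F ⊣ G)

theorem homEquiv_homEquiv_map_comp {X Y Z : D} (f : F.obj X ⟶ Y) (g : F.obj Y ⟶ Z) :
    adj.homEquiv X (G.obj Z) (adj.homEquiv (F.obj X) Z (F.map f ≫ g)) =
      adj.homEquiv X Y f ≫ G.map (adj.homEquiv Y Z g) := by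
  rw [homEquiv_naturality_left, homEquiv_naturality_right]

/-- The right-hand side is the double transpose of `F.map f ≫ g`, and transposition is an additive
bijection. -/
theorem map_comp_eq_zero_iff [Preadditive D] [F.Additive] {X Y Z : D} (f : F.obj X ⟶ Y)
    (g : F.obj Y ⟶ Z) :
    F.map f ≫ g = 0 ↔ adj.homEquiv X Y f ≫ G.map (adj.homEquiv Y Z g) = 0 := by
  rw [← homEquiv_homEquiv_map_comp, ← homAddEquiv_apply, ← homAddEquiv_apply,
    map_eq_zero_iff _ (adj.homAddEquiv _ _).injective,
    map_eq_zero_iff _ (adj.homAddEquiv _ _).injective]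

end CategoryTheory.Adjunction

namespace FComplex

variable {F : C ⥤ C}

@[ext]
theorem hom_ext {M N : FComplex C F} {φ ψ : M ⟶ N} (h : ∀ n, φ.f n = ψ.f n) : φ = ψ :=
  Hom.ext (funext h)

theorem eqToHom_f {M N : FComplex C F} (h : M = N) (n : ℤ) :
    (eqToHom h).f n = eqToHom (congr_fun (congrArg X h) n) := by
  subst h
  rfl

end FComplex

namespace RComplex

variable {G : C ⥤ C}

@[ext]
theorem hom_ext {M N : RComplex C G} {φ ψ : M ⟶ N} (h : ∀ n, φ.f n = ψ.f n) : φ = ψ :=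
  Hom.ext (funext h)

@[simp]
theorem comp_f {M N P : RComplex C G} (φ : M ⟶ N) (ψ : N ⟶ P) (n : ℤ) :
    (φ ≫ ψ).f n = φ.f n ≫ ψ.f n :=
  rfl

theorem eqToHom_f {M N : RComplex C G} (h : M = N) (n : ℤ) :
    (eqToHom h).f n = eqToHom (congr_fun (congrArg X h) n) := by
  subst h
  rfl

end RComplex

section Transpose

variable {F G : C ⥤ C} [F.Additive] (adj : F ⊣ G)

@[simps]
def FComplex.toRComplex : FComplex C F ⥤ RComplex C G where
  obj M :=
    { X := M.X
      d := fun n => adj.homEquiv _ _ (M.d n)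
      d_comp := fun n => (adj.map_comp_eq_zero_iff _ _).1 (M.d_comp n) }
  map φ :=
    { f := φ.f
      comm := fun n => (adj.homEquiv_naturality_left_square _ _ _ _ (φ.comm n)).symm }

@[simps]
def RComplex.toFComplex : RComplex C G ⥤ FComplex C F where
  obj M :=
    { X := M.X
      d := fun n => (adj.homEquiv _ _).symm (M.d n)
      d_comp := fun n => (adj.map_comp_eq_zero_iff _ _).2 (by simpa using M.d_comp n) }
  map φ :=
    { f := φ.f
      comm := fun n => adj.homEquiv_naturality_right_square _ _ _ _ (φ.comm n).symm }

theorem FComplex.toRComplex_comp_toFComplex :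
    toRComplex adj ⋙ RComplex.toFComplex adj = 𝟭 (FComplex C F) := by
  refine CategoryTheory.Functor.ext (fun M => ?_) (fun M N φ => ?_)
  · cases M
    simp [RComplex.toFComplex, toRComplex]
  · ext n
    simp only [Functor.comp_map, Functor.id_map, comp_f, eqToHom_f]
    -- both ends of each `eqToHom` are `M.X n`, but only after unfolding the functors
    erw [eqToHom_refl, eqToHom_refl, Category.id_comp, Category.comp_id]
    rfl

theorem RComplex.toFComplex_comp_toRComplex :
    toFComplex adj ⋙ FComplex.toRComplex adj = 𝟭 (RComplex C G) := by
  refine CategoryTheory.Functor.ext (fun M => ?_) (fun M N φ => ?_)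
  · cases M
    simp [toFComplex, FComplex.toRComplex]
  · ext n
    simp only [Functor.comp_map, Functor.id_map, comp_f, eqToHom_f]
    erw [eqToHom_refl, eqToHom_refl, Category.id_comp, Category.comp_id]
    rfl

end Transpose

theorem FComplex_iso_RComplex_of_adjunction_general (F G : C ⥤ C) [F.Additive]
    (adj : F ⊣ G) :
    ∃ (E : FComplex C F ⥤ RComplex C G) (E' : RComplex C G ⥤ FComplex C F),
      (∀ M : FComplex C F, (E.obj M).X = M.X) ∧
      (∀ M : FComplex C F,
        HEq (E.obj M).d (fun n : ℤ => (adj.homEquiv (M.X n) (M.X (n + 1))) (M.d n))) ∧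
      (∀ (M N : FComplex C F) (φ : M ⟶ N), HEq (E.map φ).f φ.f) ∧
      E ⋙ E' = 𝟭 (FComplex C F) ∧ E' ⋙ E = 𝟭 (RComplex C G) :=
  ⟨FComplex.toRComplex adj, RComplex.toFComplex adj, fun _ => rfl, fun _ => HEq.rfl,
    fun _ _ _ => HEq.rfl, FComplex.toRComplex_comp_toFComplex adj,
    RComplex.toFComplex_comp_toRComplex adj⟩

/-- If `(F, G)` is an adjoint pair of additive endofunctors of an additive
category `C`, then `L_F(C)` and `R_G(C)` are isomorphic categories: the functor sends
`(Mⁿ, fₙ : F(Mⁿ) ⟶ Mⁿ⁺¹)` to `(Mⁿ, gₙ : Mⁿ ⟶ G(Mⁿ⁺¹))`, where `gₙ` is the adjoint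
transpose of `fₙ`, and acts as the identity on underlying degreewise morphisms. -/
theorem FComplex_iso_RComplex_of_adjunction (F G : C ⥤ C) [F.Additive] [G.Additive]
    (adj : F ⊣ G) :
    ∃ (E : FComplex C F ⥤ RComplex C G) (E' : RComplex C G ⥤ FComplex C F),
      (∀ M : FComplex C F, (E.obj M).X = M.X) ∧
      (∀ M : FComplex C F,
        HEq (E.obj M).d (fun n : ℤ => (adj.homEquiv (M.X n) (M.X (n + 1))) (M.d n))) ∧
      (∀ (M N : FComplex C F) (φ : M ⟶ N), HEq (E.map φ).f φ.f) ∧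
      E ⋙ E' = 𝟭 (FComplex C F) ∧ E' ⋙ E = 𝟭 (RComplex C G) :=
  FComplex_iso_RComplex_of_adjunction_general F G adj
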